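/- arXiv:2307.10682 — 2 statements merged into one kernel-verified Lean document; each statement's English description precedes it below -/
import Mathlib

section
/- Let Λ be a numerical semigroup with elements λ_0 = 0 < λ_1 < λ_2 < ⋯, conductor c = λ_L, and let λ_s be a right primitive element of Λ. Set Λ̃ = Λ ∖ {λ_s}. Then for every i with L ≤ i < s − 2, the semigroup Λ̃ has no order-i seeds. -/
/-- A numerical semigroup: a cofinite additive submonoid of ℕ. -/
structure NumericalSemigroup where
  carrier : Set ℕ
  zero_mem : 0 ∈ carrier
  add_mem : ∀ a b : ℕ, a ∈ carrier → b ∈ carrier → a + b ∈ carrier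
  cofinite : (carrierᶜ : Set ℕ).Finite

namespace NumericalSemigroup

/-- The genus: the number of gaps (elements of ℕ not in the semigroup). -/
noncomputable def genus (Λ : NumericalSemigroup) : ℕ := Λ.carrierᶜ.ncard

/-- The conductor: the least `c` such that every `n ≥ c` belongs to the semigroup
(equivalently, one plus the largest gap). -/
noncomputable def conductor (Λ : NumericalSemigroup) : ℕ := sInf {c | ∀ n, c ≤ n → n ∈ Λ.carrier}

/-- The multiplicity: the smallest nonzero element. -/
noncomputable def multiplicity (Λ : NumericalSemigroup) : ℕ := sInf {x | x ∈ Λ.carrier ∧ x ≠ 0}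

/-- The increasing enumeration `λ_0 = 0 < λ_1 < λ_2 < ⋯` of the elements. -/
noncomputable def el (Λ : NumericalSemigroup) (i : ℕ) : ℕ := Nat.nth (fun n => n ∈ Λ.carrier) i

/-- `L`: the number of elements smaller than the conductor (the left elements). -/
noncomputable def leftCount (Λ : NumericalSemigroup) : ℕ := {x ∈ Λ.carrier | x < Λ.conductor}.ncard

/-- A primitive element (minimal generator): a nonzero element that is not a sum of
two nonzero elements of the semigroup. -/
noncomputable def IsPrimitive (Λ : NumericalSemigroup) (x : ℕ) : Prop :=
  x ∈ Λ.carrier ∧ x ≠ 0 ∧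
    ¬ ∃ a b : ℕ, a ∈ Λ.carrier ∧ b ∈ Λ.carrier ∧ a ≠ 0 ∧ b ≠ 0 ∧ a + b = x

/-- The set of primitive elements. -/
noncomputable def primitives (Λ : NumericalSemigroup) : Set ℕ := {x | Λ.IsPrimitive x}

/-- A right primitive element: a primitive element ≥ the conductor. -/
noncomputable def IsRightPrimitive (Λ : NumericalSemigroup) (x : ℕ) : Prop :=
  Λ.IsPrimitive x ∧ Λ.conductor ≤ x

/-- An element `x = λ_s ≥ c` is an order-`i` seed when
`λ_s + λ_i ≠ λ_j + λ_k` for all `i < j ≤ k < s`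
(the condition `k < s` is expressed as `λ_k < x`). -/
noncomputable def IsSeed (Λ : NumericalSemigroup) (i x : ℕ) : Prop :=
  x ∈ Λ.carrier ∧ Λ.conductor ≤ x ∧
    ∀ j k : ℕ, i < j → j ≤ k → Λ.el k < x → x + Λ.el i ≠ Λ.el j + Λ.el k

/-- `q = ⌈c/m⌉`. -/
noncomputable def q (Λ : NumericalSemigroup) : ℕ :=
  (Λ.conductor + Λ.multiplicity - 1) / Λ.multiplicity

/-- `ρ = q·m − c`. -/
noncomputable def rho (Λ : NumericalSemigroup) : ℕ := Λ.q * Λ.multiplicity - Λ.conductor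

/-- The Eliahou constant
`E(Λ) = #(P ∩ {x < c})·L − q·(m − #(P ∩ {x ≥ c})) + ρ`. -/
noncomputable def eliahou (Λ : NumericalSemigroup) : ℤ :=
  ({x ∈ Λ.primitives | x < Λ.conductor}.ncard : ℤ) * (Λ.leftCount : ℤ)
    - (Λ.q : ℤ) * ((Λ.multiplicity : ℤ) - ({x ∈ Λ.primitives | Λ.conductor ≤ x}.ncard : ℤ))
    + (Λ.rho : ℤ)

/-- `Λ = ⟨a,b,c⟩|_κ`: `Λ` is the smallest numerical semigroup containing
`a`, `b`, `c` and every integer `≥ κ`. -/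
noncomputable def IsSmallestContaining (Λ : NumericalSemigroup) (a b c κ : ℕ) : Prop :=
  a ∈ Λ.carrier ∧ b ∈ Λ.carrier ∧ c ∈ Λ.carrier ∧ (∀ n, κ ≤ n → n ∈ Λ.carrier) ∧
    ∀ M : NumericalSemigroup,
      a ∈ M.carrier → b ∈ M.carrier → c ∈ M.carrier → (∀ n, κ ≤ n → n ∈ M.carrier) →
        Λ.carrier ⊆ M.carrier

end NumericalSemigroup

section Aux

open Classical in
noncomputable instance : DecidablePred (· ∈ (∅ : Set ℕ)) := fun _ => Classical.dec _

namespace NumericalSemigroup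

open scoped Classical

lemma infinite_carrier (Λ : NumericalSemigroup) : Λ.carrier.Infinite := by
  simpa using Λ.cofinite.infinite_compl

lemma infinite_setOf (Λ : NumericalSemigroup) : {n | n ∈ Λ.carrier}.Infinite :=
  Λ.infinite_carrier

lemma mem_of_conductor_le (Λ : NumericalSemigroup) {n : ℕ} (h : Λ.conductor ≤ n) :
    n ∈ Λ.carrier := by
  have hne : {c | ∀ n, c ≤ n → n ∈ Λ.carrier}.Nonempty := by
    obtain ⟨N, hN⟩ := Λ.cofinite.bddAbove
    refine ⟨N + 1, fun m hm => ?_⟩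
    by_contra hc
    exact absurd (hN hc) (by omega)
  exact Nat.sInf_mem hne n h

lemma el_mem (Λ : NumericalSemigroup) (i : ℕ) : Λ.el i ∈ Λ.carrier :=
  Nat.nth_mem_of_infinite Λ.infinite_setOf i

lemma el_strictMono (Λ : NumericalSemigroup) : StrictMono Λ.el :=
  Nat.nth_strictMono Λ.infinite_setOf

lemma count_conductor_add (Λ : NumericalSemigroup) (t : ℕ) :
    Nat.count (· ∈ Λ.carrier) (Λ.conductor + t)
      = Nat.count (· ∈ Λ.carrier) Λ.conductor + t := by
  induction t with
  | zero => simp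
  | succ t ih =>
    rw [show Λ.conductor + (t + 1) = (Λ.conductor + t) + 1 by omega, Nat.count_succ, ih,
      if_pos (Λ.mem_of_conductor_le (by omega))]
    omega

lemma leftCount_eq_count (Λ : NumericalSemigroup) :
    Λ.leftCount = Nat.count (· ∈ Λ.carrier) Λ.conductor := by
  rw [Nat.count_eq_card_filter_range, leftCount, ← Set.ncard_coe_finset]
  congr 1
  ext x
  simp only [Finset.coe_filter, Finset.mem_range, Set.mem_setOf_eq]
  tauto

lemma el_of_leftCount_le (Λ : NumericalSemigroup) {i : ℕ} (h : Λ.leftCount ≤ i) :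
    Λ.el i = Λ.conductor + (i - Λ.leftCount) := by
  have hmem : Λ.conductor + (i - Λ.leftCount) ∈ Λ.carrier :=
    Λ.mem_of_conductor_le (by omega)
  have h2 := Nat.nth_count (p := (· ∈ Λ.carrier)) hmem
  rw [count_conductor_add, ← leftCount_eq_count,
    show Λ.leftCount + (i - Λ.leftCount) = i from by omega] at h2
  exact h2

end NumericalSemigroup

end Aux

/-- New-order seeds, case `L ≤ i < s - 2`: the semigroup `Λ̃ = Λ \ {λ_s}` has no
order-`i` seeds. -/
theorem newOrderSeeds_of_lt_sub_two
    (Λ : NumericalSemigroup) (s : ℕ) (hs : Λ.IsRightPrimitive (Λ.el s))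
    (M : NumericalSemigroup) (hM : M.carrier = Λ.carrier \ {Λ.el s})
    (i : ℕ) (hiL : Λ.leftCount ≤ i) (his : i + 2 < s) :
    ∀ x : ℕ, ¬ M.IsSeed i x := by
    classical
  intro x hx
  obtain ⟨hxM, hcx, hne⟩ := hx
  set c := Λ.conductor with hc
  set L := Λ.leftCount with hLdef
  set ls := Λ.el s with hls
  have hsL : L ≤ s := le_trans hiL (by omega)
  have hli : Λ.el i = c + (i - L) := Λ.el_of_leftCount_le hiL
  have hlseq : ls = c + (s - L) := Λ.el_of_leftCount_le hsL
  have hlis : Λ.el i + 3 ≤ ls := by omega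
  have hlsnotM : ls ∉ M.carrier := by rw [hM]; simp
  -- x > ls
  have hlsx : ls < x := by
    by_contra hcon
    exact hlsnotM (M.mem_of_conductor_le (le_trans hcx (by omega)))
  have hMinf : {n | n ∈ M.carrier}.Infinite := M.infinite_carrier
  -- counts agree below ls + 1
  have hcount : ∀ n : ℕ, n ≤ ls → Nat.count (· ∈ M.carrier) n = Nat.count (· ∈ Λ.carrier) n := by
    intro n hn
    rw [Nat.count_eq_card_filter_range, Nat.count_eq_card_filter_range]
    congr 1
    apply Finset.filter_congr
    intro y hy
    simp only [Finset.mem_range] at hy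
    rw [hM]
    simp only [Set.mem_diff, Set.mem_singleton_iff, eq_iff_iff]
    constructor
    · exact fun h => h.1
    · exact fun h => ⟨h, by omega⟩
  have hmemM : ∀ v : ℕ, v ∈ Λ.carrier → v ≠ ls → v ∈ M.carrier := by
    intro v h1 h2; rw [hM]; exact ⟨h1, h2⟩
  -- M.el i = Λ.el i
  have hliM : Λ.el i ∈ M.carrier := hmemM _ (Λ.el_mem i) (by omega)
  have hMi : M.el i = Λ.el i := by
    have h2 := Nat.nth_count (p := (· ∈ M.carrier)) hliM
    have h3 : Nat.count (· ∈ Λ.carrier) (Λ.el i) = i :=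
      Nat.count_nth_of_infinite Λ.infinite_setOf i
    rwa [hcount _ (by omega), h3] at h2
  -- choose values
  rcases eq_or_lt_of_le (show ls + 1 ≤ x by omega) with hx1 | hx2
  · -- x = ls + 1 : use v_j = λ_i + 2, v_k = ls - 1
    have hvj : Λ.el i + 2 ∈ M.carrier :=
      hmemM _ (Λ.mem_of_conductor_le (by omega)) (by omega)
    have hvk : ls - 1 ∈ M.carrier :=
      hmemM _ (Λ.mem_of_conductor_le (by omega)) (by omega)
    set j := Nat.count (· ∈ M.carrier) (Λ.el i + 2) with hj
    set k := Nat.count (· ∈ M.carrier) (ls - 1) with hk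
    have hMj : M.el j = Λ.el i + 2 := Nat.nth_count hvj
    have hMk : M.el k = ls - 1 := Nat.nth_count hvk
    have hij : i < j := by
      rw [← (Nat.nth_strictMono hMinf).lt_iff_lt]
      show M.el i < M.el j
      rw [hMi, hMj]; omega
    have hjk : j ≤ k := by
      rw [← (Nat.nth_strictMono hMinf).le_iff_le]
      show M.el j ≤ M.el k
      rw [hMj, hMk]; omega
    refine hne j k hij hjk (by rw [hMk]; omega) ?_
    rw [hMi, hMj, hMk]; omega
  · -- x ≥ ls + 2 : use v_j = λ_i + 1, v_k = x - 1
    have hvj : Λ.el i + 1 ∈ M.carrier :=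
      hmemM _ (Λ.mem_of_conductor_le (by omega)) (by omega)
    have hvk : x - 1 ∈ M.carrier :=
      hmemM _ (Λ.mem_of_conductor_le (by omega)) (by omega)
    set j := Nat.count (· ∈ M.carrier) (Λ.el i + 1) with hj
    set k := Nat.count (· ∈ M.carrier) (x - 1) with hk
    have hMj : M.el j = Λ.el i + 1 := Nat.nth_count hvj
    have hMk : M.el k = x - 1 := Nat.nth_count hvk
    have hij : i < j := by
      rw [← (Nat.nth_strictMono hMinf).lt_iff_lt]
      show M.el i < M.el j
      rw [hMi, hMj]; omega
    have hjk : j ≤ k := by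
      rw [← (Nat.nth_strictMono hMinf).le_iff_le]
      show M.el j ≤ M.el k
      rw [hMj, hMk]; omega
    refine hne j k hij hjk (by rw [hMk]; omega) ?_
    rw [hMi, hMj, hMk]; omega
end

section
/- If a numerical semigroup Λ has nonnegative Eliahou constant E(Λ) ≥ 0, then Λ satisfies the Wilf conjecture, that is, c(Λ) ≤ L(Λ) · #P(Λ). -/
namespace NumericalSemigroup

lemma conductor_spec (Λ : NumericalSemigroup) : ∀ n, Λ.conductor ≤ n → n ∈ Λ.carrier := by
  have hne : {c | ∀ n, c ≤ n → n ∈ Λ.carrier}.Nonempty := by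
    obtain ⟨N, hN⟩ := Λ.cofinite.bddAbove
    refine ⟨N + 1, fun n hn => ?_⟩
    by_contra h
    have := hN h
    omega
  exact Nat.sInf_mem hne

lemma mult_spec (Λ : NumericalSemigroup) :
    Λ.multiplicity ∈ Λ.carrier ∧ Λ.multiplicity ≠ 0 := by
  have hne : {x | x ∈ Λ.carrier ∧ x ≠ 0}.Nonempty :=
    ⟨Λ.conductor + 1, Λ.conductor_spec _ (by omega), by omega⟩
  exact Nat.sInf_mem hne

lemma mul_mult_mem (Λ : NumericalSemigroup) (j : ℕ) : j * Λ.multiplicity ∈ Λ.carrier := by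
  induction j with
  | zero => simpa using Λ.zero_mem
  | succ n ih =>
    have := Λ.add_mem _ _ ih Λ.mult_spec.1
    simpa [Nat.succ_mul] using this

lemma conductor_le_q_mul (Λ : NumericalSemigroup) :
    Λ.conductor ≤ Λ.q * Λ.multiplicity := by
  have hm : 1 ≤ Λ.multiplicity := Nat.one_le_iff_ne_zero.2 Λ.mult_spec.2
  have hdm := Nat.div_add_mod (Λ.conductor + Λ.multiplicity - 1) Λ.multiplicity
  have hmod : (Λ.conductor + Λ.multiplicity - 1) % Λ.multiplicity < Λ.multiplicity :=
    Nat.mod_lt _ hm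
  have : Λ.q * Λ.multiplicity = Λ.multiplicity *
      ((Λ.conductor + Λ.multiplicity - 1) / Λ.multiplicity) := by
    rw [NumericalSemigroup.q, Nat.mul_comm]
  omega

lemma q_mul_le (Λ : NumericalSemigroup) :
    Λ.q * Λ.multiplicity ≤ Λ.conductor + Λ.multiplicity - 1 := by
  have hm : 1 ≤ Λ.multiplicity := Nat.one_le_iff_ne_zero.2 Λ.mult_spec.2
  have hdm := Nat.div_add_mod (Λ.conductor + Λ.multiplicity - 1) Λ.multiplicity
  have : Λ.q * Λ.multiplicity = Λ.multiplicity *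
      ((Λ.conductor + Λ.multiplicity - 1) / Λ.multiplicity) := by
    rw [NumericalSemigroup.q, Nat.mul_comm]
  omega

lemma q_le_leftCount (Λ : NumericalSemigroup) : Λ.q ≤ Λ.leftCount := by
  have hm : 1 ≤ Λ.multiplicity := Nat.one_le_iff_ne_zero.2 Λ.mult_spec.2
  have hqm := Λ.q_mul_le
  have hsub : (fun j => j * Λ.multiplicity) '' Set.Iio Λ.q ⊆
      {x ∈ Λ.carrier | x < Λ.conductor} := by
    rintro x ⟨j, hj, rfl⟩
    refine ⟨Λ.mul_mult_mem j, ?_⟩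
    show j * Λ.multiplicity < Λ.conductor
    have hj1 : j + 1 ≤ Λ.q := hj
    have h1 : (j + 1) * Λ.multiplicity ≤ Λ.q * Λ.multiplicity :=
      Nat.mul_le_mul_right _ hj1
    have h2 : (j + 1) * Λ.multiplicity = j * Λ.multiplicity + Λ.multiplicity := by ring
    omega
  have hfin : {x ∈ Λ.carrier | x < Λ.conductor}.Finite :=
    (Set.finite_Iio Λ.conductor).subset fun x hx => hx.2
  have hcard : ((fun j => j * Λ.multiplicity) '' Set.Iio Λ.q).ncard = Λ.q := by
    rw [Set.ncard_image_of_injective _ (fun a b hab => by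
      exact Nat.eq_of_mul_eq_mul_right (by omega) hab)]
    rw [← Finset.coe_range, Set.ncard_coe_finset, Finset.card_range]
  calc Λ.q = ((fun j => j * Λ.multiplicity) '' Set.Iio Λ.q).ncard := hcard.symm
    _ ≤ {x ∈ Λ.carrier | x < Λ.conductor}.ncard := Set.ncard_le_ncard hsub hfin
    _ = Λ.leftCount := rfl

lemma primitives_finite (Λ : NumericalSemigroup) (hc : 1 ≤ Λ.conductor) :
    Λ.primitives.Finite := by
  apply (Set.finite_Iio (Λ.conductor + Λ.multiplicity)).subset
  intro x hx
  obtain ⟨hxc, hx0, hnd⟩ := hx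
  by_contra h
  have hle : Λ.conductor + Λ.multiplicity ≤ x := by
    simpa [Set.mem_Iio, not_lt] using h
  exact hnd ⟨x - Λ.multiplicity, Λ.multiplicity,
    Λ.conductor_spec _ (by omega), Λ.mult_spec.1, by omega, Λ.mult_spec.2, by omega⟩

end NumericalSemigroup

/-- Eliahou's theorem: a numerical semigroup with nonnegative Eliahou constant
satisfies the Wilf conjecture `c ≤ L · #P`. -/
theorem wilf_of_eliahou_nonneg (Λ : NumericalSemigroup) (hE : 0 ≤ Λ.eliahou) :
    Λ.conductor ≤ Λ.leftCount * Λ.primitives.ncard := by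
  rcases Nat.eq_zero_or_pos Λ.conductor with hc | hc
  · simp [hc]
  have hPfin := Λ.primitives_finite hc
  have hP : Λ.primitives.ncard =
      {x ∈ Λ.primitives | x < Λ.conductor}.ncard +
      {x ∈ Λ.primitives | Λ.conductor ≤ x}.ncard := by
    rw [← Set.ncard_union_eq (by
        rw [Set.disjoint_left]
        rintro x ⟨_, h1⟩ ⟨_, h2⟩
        omega)
      (hPfin.subset fun x hx => hx.1) (hPfin.subset fun x hx => hx.1)]
    congr 1
    ext x
    simp only [Set.mem_union, Set.mem_setOf_eq, Set.mem_sep_iff]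
    constructor
    · intro hx
      by_cases h : x < Λ.conductor
      · exact Or.inl ⟨hx, h⟩
      · exact Or.inr ⟨hx, by omega⟩
    · rintro (⟨hx, _⟩ | ⟨hx, _⟩) <;> exact hx
  have hqL : Λ.q ≤ Λ.leftCount := Λ.q_le_leftCount
  have hcq : Λ.conductor ≤ Λ.q * Λ.multiplicity := Λ.conductor_le_q_mul
  have hrho : (Λ.rho : ℤ) = (Λ.q : ℤ) * (Λ.multiplicity : ℤ) - (Λ.conductor : ℤ) := by
    rw [NumericalSemigroup.rho]
    push_cast [Nat.cast_sub hcq]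
    ring
  rw [NumericalSemigroup.eliahou] at hE
  set PL := {x ∈ Λ.primitives | x < Λ.conductor}.ncard
  set PR := {x ∈ Λ.primitives | Λ.conductor ≤ x}.ncard
  rw [hrho] at hE
  have key : (Λ.conductor : ℤ) ≤ (PL : ℤ) * (Λ.leftCount : ℤ) + (Λ.q : ℤ) * (PR : ℤ) := by
    linarith [hE]
  have h2 : (Λ.q : ℤ) * (PR : ℤ) ≤ (Λ.leftCount : ℤ) * (PR : ℤ) := by
    apply mul_le_mul_of_nonneg_right _ (by positivity)
    exact_mod_cast hqL
  have hgoal : (Λ.conductor : ℤ) ≤ (Λ.leftCount : ℤ) * ((PL : ℤ) + (PR : ℤ)) := by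
    nlinarith
  rw [hP]
  exact_mod_cast hgoal
end
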